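/- arXiv:nlin/0405007 — 6 statements merged into one kernel-verified Lean document; each statement's English description precedes it below -/
import Mathlib

section
/- If v is a formal Laurent series of the form v = 1/(2x) + v_1 x + ∑_{k≥3} v_k x^k, then the Miura transform M(v) := v_x + 2v² is a series of the form w_0 + ∑_{k≥2} w_k x^k (i.e., it has no x^{-2}, x^{-1}, or x^1 terms). -/
/-- Formal derivative on Laurent series: `(D q).coeff k = (k+1) * q.coeff (k+1)`. -/
noncomputable def D (q : LaurentSeries ℂ) : LaurentSeries ℂ :=
  HahnSeries.ofSuppBddBelow (fun k => ((k + 1 : ℤ) : ℂ) * q.coeff (k + 1))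
    (HahnSeries.forallLTEqZero_supp_BddBelow _ (q.order - 1) (fun m hm => by
      have h : m + 1 < q.order := by omega
      simp [HahnSeries.coeff_eq_zero_of_lt_order h]))

@[simp] lemma D_coeff (q : LaurentSeries ℂ) (k : ℤ) :
    (D q).coeff k = ((k + 1 : ℤ) : ℂ) * q.coeff (k + 1) := rfl

/-- The residue: coefficient of `x⁻¹`. -/
noncomputable def res (q : LaurentSeries ℂ) : ℂ := q.coeff (-1)

/-- `V`: series of the form `(1/2)x⁻¹ + v₁x + ∑_{k≥3} vₖ xᵏ`. -/
def memV (v : LaurentSeries ℂ) : Prop :=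
  v.coeff (-1) = 1/2 ∧ v.coeff 0 = 0 ∧ v.coeff 2 = 0 ∧ ∀ k < (-1 : ℤ), v.coeff k = 0

/-- `W`: series of the form `w₀ + ∑_{k≥2} wₖ xᵏ`. -/
def memW (w : LaurentSeries ℂ) : Prop :=
  w.coeff 1 = 0 ∧ ∀ k < (0 : ℤ), w.coeff k = 0

/-- `U`: series of the form `x⁻² + u₀ + ∑_{k≥2} uₖ xᵏ`. -/
def memU (u : LaurentSeries ℂ) : Prop :=
  u.coeff (-2) = 1 ∧ u.coeff (-1) = 0 ∧ u.coeff 1 = 0 ∧ ∀ k < (-2 : ℤ), u.coeff k = 0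

/-- The Miura transformation `M(v) = v_x + 2v²`. -/
noncomputable def M (v : LaurentSeries ℂ) : LaurentSeries ℂ := D v + 2 * v ^ 2

/-- The composition `M ∘ R` of Miura with the reflection `R(v) = -v`:
`(M∘R)(v) = -v_x + 2v²`. -/
noncomputable def MR (v : LaurentSeries ℂ) : LaurentSeries ℂ := -(D v) + 2 * v ^ 2

/-- The Miura transform maps `V` into `W`. -/
theorem stmt4 (v : LaurentSeries ℂ) (hv : memV v) : memW (M v) := by
  obtain ⟨h1, h0, h2, hneg⟩ := hv
  have hsq1 : (v * v).coeff 1 = 0 := by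
    rw [HahnSeries.coeff_mul]
    apply Finset.sum_eq_zero
    rintro ⟨i, j⟩ hij
    rw [Finset.mem_addAntidiagonal] at hij
    obtain ⟨hi, hj, hsum⟩ := hij
    by_cases h : i < -1
    · rw [hneg i h, zero_mul]
    · by_cases h' : j < -1
      · rw [hneg j h', mul_zero]
      · have : i = -1 ∧ j = 2 ∨ i = 0 ∧ j = 1 ∨ i = 1 ∧ j = 0 ∨ i = 2 ∧ j = -1 := by omega
        rcases this with ⟨hi', hj'⟩ | ⟨hi', hj'⟩ | ⟨hi', hj'⟩ | ⟨hi', hj'⟩ <;>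
          subst hi' <;> subst hj' <;> simp [h0, h2]
  have hsqm1 : (v * v).coeff (-1) = 0 := by
    rw [HahnSeries.coeff_mul]
    apply Finset.sum_eq_zero
    rintro ⟨i, j⟩ hij
    rw [Finset.mem_addAntidiagonal] at hij
    obtain ⟨hi, hj, hsum⟩ := hij
    by_cases h : i < -1
    · rw [hneg i h, zero_mul]
    · by_cases h' : j < -1
      · rw [hneg j h', mul_zero]
      · have : i = -1 ∧ j = 0 ∨ i = 0 ∧ j = -1 := by omega
        rcases this with ⟨hi', hj'⟩ | ⟨hi', hj'⟩ <;>
          subst hi' <;> subst hj' <;> simp [h0]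
  have hsqm2 : (v * v).coeff (-2) = 1 / 4 := by
    rw [HahnSeries.coeff_mul]
    rw [Finset.sum_eq_single ((-1, -1) : ℤ × ℤ)]
    · rw [h1]; norm_num
    · rintro ⟨i, j⟩ hij hne
      rw [Finset.mem_addAntidiagonal] at hij
      obtain ⟨hi, hj, hsum⟩ := hij
      by_cases h : i < -1
      · rw [hneg i h, zero_mul]
      · by_cases h' : j < -1
        · rw [hneg j h', mul_zero]
        · exfalso; apply hne; have : i = -1 ∧ j = -1 := by omega
          simp [this.1, this.2]
    · intro habs
      exfalso; apply habs
      rw [Finset.mem_addAntidiagonal]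
      refine ⟨?_, ?_, by norm_num⟩ <;>
        · simp only [HahnSeries.mem_support, h1]; norm_num
  have hsqlow : ∀ k < (-2 : ℤ), (v * v).coeff k = 0 := by
    intro k hk
    rw [HahnSeries.coeff_mul]
    apply Finset.sum_eq_zero
    rintro ⟨i, j⟩ hij
    rw [Finset.mem_addAntidiagonal] at hij
    obtain ⟨hi, hj, hsum⟩ := hij
    by_cases h : i < -1
    · rw [hneg i h, zero_mul]
    · rw [hneg j (by omega), mul_zero]
  constructor
  · show (M v).coeff 1 = 0
    simp only [M, sq, two_mul, HahnSeries.coeff_add, D_coeff, hsq1]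
    norm_num
    exact h2
  · intro k hk
    show (M v).coeff k = 0
    simp only [M, sq, two_mul, HahnSeries.coeff_add, D_coeff]
    rcases lt_trichotomy k (-2) with h | h | h
    · rw [hneg (k + 1) (by omega), hsqlow k h]; ring
    · subst h; norm_num [h1, hsqm2]
    · have hk1 : k = -1 := by omega
      subst hk1; norm_num [hsqm1]
end

section
/- The map M∘R, where M(p) = p_x + 2p² and R(p) = -p, is a bijection from V := {v = (1/2)x^{-1} + v_1 x + ∑_{k≥3} v_k x^k} onto U := {u = x^{-2} + u_0 + ∑_{k≥2} u_k x^k}: for each u ∈ U there is a unique v ∈ V with -v_x + 2v² = u. -/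
/-!
Write `v = ½x⁻¹ + ∑_{n ≥ 0} vₙ xⁿ`. Comparing coefficients, `-v_x + 2v²` has coefficients `1` at
`x⁻²` and `2v₀` at `x⁻¹`, and `(1 - n) vₙ₊₁ + 2 ∑_{i+j=n} vᵢ vⱼ` at `xⁿ` for `n ≥ 0`. Hence, for
`u ∈ U`, the equation determines `vₙ₊₁` from `v₀, …, vₙ`, except at `n = 1`: there the factor
`1 - n` vanishes and the equation reduces to `u₁ = 4 v₀ v₁ = 0`, and the free coefficient `v₂`
is fixed by the normalisation `v₂ = 0` of `V`.
-/

open Finset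

namespace LaurentSeries

variable {R : Type*} [CommSemiring R]

theorem single_mul_coe_mk_coeff_add {x : LaurentSeries R} {a : ℤ}
    (hx : ∀ k < a, x.coeff k = 0) :
    HahnSeries.single a 1 * ((PowerSeries.mk fun n : ℕ => x.coeff (a + n) : PowerSeries R) :
      LaurentSeries R) = x := by
  ext k
  rw [HahnSeries.coeff_single_mul, one_mul, PowerSeries.coeff_coe]
  split_ifs with hk
  · exact (hx k (by omega)).symm
  · rw [PowerSeries.coeff_mk, Int.natAbs_of_nonneg (by omega), add_sub_cancel]

theorem mul_eq_single_mul_coe {x y : LaurentSeries R} {a b : ℤ}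
    (hx : ∀ k < a, x.coeff k = 0) (hy : ∀ k < b, y.coeff k = 0) :
    x * y = HahnSeries.single (a + b) 1 * (((PowerSeries.mk fun n : ℕ => x.coeff (a + n)) *
      (PowerSeries.mk fun n : ℕ => y.coeff (b + n)) : PowerSeries R) : LaurentSeries R) := by
  conv_lhs => rw [← single_mul_coe_mk_coeff_add hx, ← single_mul_coe_mk_coeff_add hy]
  rw [PowerSeries.coe_mul, mul_mul_mul_comm, HahnSeries.single_mul_single, mul_one]

theorem coeff_mul_eq_sum_antidiagonal {x y : LaurentSeries R} {a b k : ℤ} {n : ℕ}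
    (hx : ∀ k < a, x.coeff k = 0) (hy : ∀ k < b, y.coeff k = 0) (hk : a + b + n = k) :
    (x * y).coeff k = ∑ p ∈ antidiagonal n, x.coeff (a + p.1) * y.coeff (b + p.2) := by
  rw [mul_eq_single_mul_coe hx hy, HahnSeries.coeff_single_mul, one_mul, PowerSeries.coeff_coe,
    if_neg (by omega), ← hk, add_sub_cancel_left, Int.natAbs_natCast, PowerSeries.coeff_mul]
  simp only [PowerSeries.coeff_mk]

theorem coeff_mul_eq_zero_of_lt {x y : LaurentSeries R} {a b k : ℤ}
    (hx : ∀ k < a, x.coeff k = 0) (hy : ∀ k < b, y.coeff k = 0) (hk : k < a + b) :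
    (x * y).coeff k = 0 := by
  rw [mul_eq_single_mul_coe hx hy, HahnSeries.coeff_single_mul, one_mul, PowerSeries.coeff_coe,
    if_pos (by omega)]

end LaurentSeries

open LaurentSeries

theorem coeff_MR (v : LaurentSeries ℂ) (k : ℤ) :
    (MR v).coeff k = -((k + 1 : ℤ) : ℂ) * v.coeff (k + 1) + 2 * (v ^ 2).coeff k := by
  rw [MR, two_mul, HahnSeries.coeff_add, HahnSeries.coeff_neg, D_coeff, HahnSeries.coeff_add]
  ring

section CoeffMR

variable {v : LaurentSeries ℂ}

theorem coeff_MR_of_lt_neg_two (hlow : ∀ k < -1, v.coeff k = 0) {k : ℤ} (hk : k < -2) :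
    (MR v).coeff k = 0 := by
  rw [coeff_MR, sq, coeff_mul_eq_zero_of_lt hlow hlow (by omega), hlow (k + 1) (by omega)]
  ring

theorem coeff_MR_neg_two (hlow : ∀ k < -1, v.coeff k = 0) (hres : v.coeff (-1) = 1 / 2) :
    (MR v).coeff (-2) = 1 := by
  rw [coeff_MR, sq, coeff_mul_eq_sum_antidiagonal hlow hlow (n := 0) (by norm_num)]
  norm_num [hres]

theorem coeff_MR_neg_one (hlow : ∀ k < -1, v.coeff k = 0) (hres : v.coeff (-1) = 1 / 2) :
    (MR v).coeff (-1) = 2 * v.coeff 0 := by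
  rw [coeff_MR, sq, coeff_mul_eq_sum_antidiagonal hlow hlow (n := 1) (by norm_num),
    Nat.sum_antidiagonal_succ, Nat.antidiagonal_zero, sum_singleton]
  simp only [neg_add_cancel, Int.cast_zero, neg_zero, zero_mul, zero_add, CharP.cast_eq_zero,
    Nat.cast_one, add_zero, hres]
  ring

theorem coeff_MR_natCast (hlow : ∀ k < -1, v.coeff k = 0) (hres : v.coeff (-1) = 1 / 2)
    (n : ℕ) :
    (MR v).coeff n = (1 - n) * v.coeff (n + 1 : ℕ)
      + 2 * ∑ p ∈ antidiagonal n, v.coeff p.1 * v.coeff p.2 := by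
  rw [coeff_MR, sq, coeff_mul_eq_sum_antidiagonal hlow hlow (n := n + 2) (by push_cast; ring),
    Nat.sum_antidiagonal_succ, Nat.sum_antidiagonal_succ']
  simp only [Int.cast_add, Int.cast_natCast, Int.cast_one, CharP.cast_eq_zero, add_zero,
    Nat.cast_add, Nat.cast_one, neg_add_cancel_comm_assoc, hres]
  ring

end CoeffMR

theorem memU_MR {v : LaurentSeries ℂ} (hv : memV v) : memU (MR v) := by
  obtain ⟨hres, h0, -, hlow⟩ := hv
  refine ⟨coeff_MR_neg_two hlow hres, ?_, ?_, fun k hk => coeff_MR_of_lt_neg_two hlow hk⟩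
  · rw [coeff_MR_neg_one hlow hres, h0, mul_zero]
  · simpa [Nat.sum_antidiagonal_succ, h0] using coeff_MR_natCast hlow hres 1

theorem eq_of_memU {u u' : LaurentSeries ℂ} (hu : memU u) (hu' : memU u')
    (h : ∀ n : ℕ, n ≠ 1 → u.coeff n = u'.coeff n) : u = u' := by
  obtain ⟨hu₂, hu₁, hu1, hulow⟩ := hu
  obtain ⟨hu'₂, hu'₁, hu'1, hu'low⟩ := hu'
  ext k
  obtain hk | rfl | rfl | hk : k < -2 ∨ k = -2 ∨ k = -1 ∨ 0 ≤ k := by omega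
  · rw [hulow k hk, hu'low k hk]
  · rw [hu₂, hu'₂]
  · rw [hu₁, hu'₁]
  · lift k to ℕ using hk
    obtain rfl | hk1 := eq_or_ne k 1
    · rw [Nat.cast_one, hu1, hu'1]
    · exact h k hk1

theorem eq_of_memV {v w : LaurentSeries ℂ} (hv : memV v) (hw : memV w)
    (h : ∀ n : ℕ, v.coeff n = w.coeff n) : v = w := by
  obtain ⟨hvres, -, -, hvlow⟩ := hv
  obtain ⟨hwres, -, -, hwlow⟩ := hw
  ext k
  obtain hk | rfl | hk : k < -1 ∨ k = -1 ∨ 0 ≤ k := by omega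
  · rw [hvlow k hk, hwlow k hk]
  · rw [hvres, hwres]
  · lift k to ℕ using hk
    exact h k

theorem MR_injOn : Set.InjOn MR {v | memV v} := by
  intro v hv w hw hvw
  refine eq_of_memV hv hw fun n => ?_
  obtain ⟨hvres, hv0, hv2, hvlow⟩ := hv
  obtain ⟨hwres, hw0, hw2, hwlow⟩ := hw
  induction n using Nat.strong_induction_on with
  | _ n ih =>
    obtain _ | n := n
    · rw [Nat.cast_zero, hv0, hw0]
    obtain rfl | hn := eq_or_ne n 1
    · rw [show ((1 + 1 : ℕ) : ℤ) = 2 by norm_num, hv2, hw2]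
    have hsum : ∑ p ∈ antidiagonal n, v.coeff p.1 * v.coeff p.2
        = ∑ p ∈ antidiagonal n, w.coeff p.1 * w.coeff p.2 :=
      sum_congr rfl fun p hp => by
        rw [ih p.1 (Nat.antidiagonal.fst_lt hp), ih p.2 (Nat.antidiagonal.snd_lt hp)]
    have hcoeff := congrArg (HahnSeries.coeff · (n : ℤ)) hvw
    simp only [coeff_MR_natCast hvlow hvres, coeff_MR_natCast hwlow hwres, hsum,
      add_left_inj] at hcoeff
    exact mul_left_cancel₀ (sub_ne_zero.mpr (by exact_mod_cast hn.symm)) hcoeff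

/-- At `n = 1` the division by `1 - n = 0` returns `0`, which is the normalisation
`v.coeff 2 = 0` of `V`. -/
noncomputable def invMRCoeff (u : LaurentSeries ℂ) : ℕ → ℂ
  | 0 => 0
  | n + 1 => (u.coeff n -
      2 * ∑ p ∈ (antidiagonal n).attach, invMRCoeff u p.1.1 * invMRCoeff u p.1.2) / (1 - n)
decreasing_by
  · exact Nat.antidiagonal.fst_lt p.2
  · exact Nat.antidiagonal.snd_lt p.2

theorem invMRCoeff_succ (u : LaurentSeries ℂ) (n : ℕ) :
    invMRCoeff u (n + 1) =
      (u.coeff n - 2 * ∑ p ∈ antidiagonal n, invMRCoeff u p.1 * invMRCoeff u p.2) / (1 - n) := by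
  rw [invMRCoeff, sum_attach (antidiagonal n) fun p => invMRCoeff u p.1 * invMRCoeff u p.2]

noncomputable def invMR (u : LaurentSeries ℂ) : LaurentSeries ℂ :=
  HahnSeries.single (-1) (1 / 2) + (PowerSeries.mk (invMRCoeff u) : LaurentSeries ℂ)

theorem coeff_invMR_natCast (u : LaurentSeries ℂ) (n : ℕ) :
    (invMR u).coeff n = invMRCoeff u n := by
  simp [invMR]

theorem memV_invMR (u : LaurentSeries ℂ) : memV (invMR u) := by
  refine ⟨?_, ?_, ?_, fun k hk => ?_⟩
  · simp [invMR, PowerSeries.coeff_coe]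
  · simpa [invMRCoeff] using coeff_invMR_natCast u 0
  · simpa [invMRCoeff_succ] using coeff_invMR_natCast u 2
  · simp [invMR, PowerSeries.coeff_coe, hk.ne, hk.trans (show (-1 : ℤ) < 0 by norm_num)]

theorem MR_invMR {u : LaurentSeries ℂ} (hu : memU u) : MR (invMR u) = u := by
  obtain ⟨hres, -, -, hlow⟩ := memV_invMR u
  refine eq_of_memU (memU_MR (memV_invMR u)) hu fun n hn => ?_
  have hn' : (1 - n : ℂ) ≠ 0 := sub_ne_zero.mpr (by exact_mod_cast hn.symm)
  rw [coeff_MR_natCast hlow hres, coeff_invMR_natCast, invMRCoeff_succ, mul_div_cancel₀ _ hn']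
  simp only [coeff_invMR_natCast, sub_add_cancel]

/-- `M ∘ R` is a bijection from `V` onto `U`. -/
theorem stmt8 :
    (∀ v : LaurentSeries ℂ, memV v → memU (MR v)) ∧
    (∀ u : LaurentSeries ℂ, memU u → ∃! v : LaurentSeries ℂ, memV v ∧ MR v = u) :=
  ⟨fun _ => memU_MR, fun u hu => ⟨invMR u, ⟨memV_invMR u, MR_invMR hu⟩,
    fun _ ⟨hv, hvu⟩ => MR_injOn hv (memV_invMR u) (hvu.trans (MR_invMR hu).symm)⟩⟩
end

section
/- The unique v ∈ V with v_x + 2v² = w (for w = w_0 + ∑_{k≥2} w_k x^k) satisfies v_1 = (1/3)w_0, v_3 = -(2/45)w_0² + (1/5)w_2, v_4 = (1/6)w_3, v_5 = (8/945)w_0³ - (4/105)w_0 w_2 + (1/7)w_4, and v_6 = -(1/36)w_0 w_3 + (1/8)w_5. -/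
/-! Since `v = (1/2)x⁻¹ + O(x)`, the pairs `(x⁻¹, x^{k+1})` in `2v²` add `2v_{k+1}` to the
`(k+1)v_{k+1}` coming from `v_x`, so for `k ≥ 0` the `x^k`-coefficient of `v_x + 2v²` is
`(k+3)v_{k+1} + 2∑_{i+j=k} v_i v_j`. This recursion is triangular, and solving it for
`k = 0, 2, 3, 4, 5` (using `v_0 = v_2 = 0`) gives the stated coefficients. -/

open HahnSeries Finset

namespace LaurentSeries

variable {R : Type*}

theorem eq_single_mul_coe_of_coeff_eq_zero [Semiring R] {a : LaurentSeries R} {m : ℤ}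
    (ha : ∀ j < m, a.coeff j = 0) :
    a = single m 1 * ((PowerSeries.mk fun i : ℕ => a.coeff (m + i) : PowerSeries R) :
      LaurentSeries R) := by
  ext j
  rw [coeff_single_mul, one_mul, PowerSeries.coeff_coe]
  split_ifs with hj
  · exact ha j (by omega)
  · simp only [PowerSeries.coeff_mk]
    congr 1
    omega

theorem coeff_mul_add_add_of_coeff_eq_zero [CommSemiring R] {a b : LaurentSeries R} {m n : ℤ}
    (ha : ∀ j < m, a.coeff j = 0) (hb : ∀ j < n, b.coeff j = 0) (k : ℕ) :
    (a * b).coeff (m + n + k) =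
      ∑ p ∈ antidiagonal k, a.coeff (m + p.1) * b.coeff (n + p.2) := by
  conv_lhs => rw [eq_single_mul_coe_of_coeff_eq_zero ha, eq_single_mul_coe_of_coeff_eq_zero hb,
    mul_mul_mul_comm, single_mul_single, one_mul, ← map_mul, add_comm (m + n),
    coeff_single_mul_add, one_mul, coeff_coe_powerSeries, PowerSeries.coeff_mul]
  simp only [PowerSeries.coeff_mk]

end LaurentSeries

theorem coeff_M_natCast {v : LaurentSeries ℂ} (hv : v.coeff (-1) = 1 / 2)
    (hv_low : ∀ j < -1, v.coeff j = 0) (k : ℕ) :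
    (M v).coeff k =
      (k + 3) * v.coeff (k + 1) + 2 * ∑ p ∈ antidiagonal k, v.coeff p.1 * v.coeff p.2 := by
  have coeff_sq : (v ^ 2).coeff k =
      v.coeff (k + 1) + ∑ p ∈ antidiagonal k, v.coeff p.1 * v.coeff p.2 := by
    rw [sq, show (k : ℤ) = -1 + -1 + (k + 2 : ℕ) by push_cast; ring,
      LaurentSeries.coeff_mul_add_add_of_coeff_eq_zero hv_low hv_low,
      Nat.sum_antidiagonal_succ, Nat.sum_antidiagonal_succ']
    push_cast
    simp only [hv]
    ring_nf
  rw [M, two_mul, coeff_add, coeff_add, D_coeff, coeff_sq]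
  push_cast
  ring

theorem stmt11_general (w v : LaurentSeries ℂ) (hv : memV v) (h : M v = w) :
    v.coeff 1 = (1/3) * w.coeff 0 ∧
    v.coeff 3 = -(2/45) * (w.coeff 0) ^ 2 + (1/5) * w.coeff 2 ∧
    v.coeff 4 = (1/6) * w.coeff 3 ∧
    v.coeff 5 = (8/945) * (w.coeff 0) ^ 3 - (4/105) * w.coeff 0 * w.coeff 2
      + (1/7) * w.coeff 4 ∧
    v.coeff 6 = -(1/36) * w.coeff 0 * w.coeff 3 + (1/8) * w.coeff 5 := by
  obtain ⟨hv_neg_one, hv0, hv2, hv_low⟩ := hv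
  have coeff_w (k : ℕ) := h ▸ coeff_M_natCast hv_neg_one hv_low k
  have e0 := coeff_w 0
  have e2 := coeff_w 2
  have e3 := coeff_w 3
  have e4 := coeff_w 4
  have e5 := coeff_w 5
  norm_num [Nat.sum_antidiagonal_eq_sum_range_succ_mk, sum_range_succ, hv0, hv2]
    at e0 e2 e3 e4 e5
  have hv1 : v.coeff 1 = (1/3) * w.coeff 0 := by linear_combination -(1/3) * e0
  have hv3 : v.coeff 3 = -(2/45) * (w.coeff 0) ^ 2 + (1/5) * w.coeff 2 := by
    rw [hv1] at e2; linear_combination -(1/5) * e2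
  have hv4 : v.coeff 4 = (1/6) * w.coeff 3 := by linear_combination -(1/6) * e3
  refine ⟨hv1, hv3, hv4, ?_, ?_⟩
  · rw [hv1, hv3] at e4; linear_combination -(1/7) * e4
  · rw [hv1, hv4] at e5; linear_combination -(1/8) * e5

/-- First coefficients of the solution `v ∈ V` of `v_x + 2v² = w`, `w ∈ W`. -/
theorem stmt11 (w v : LaurentSeries ℂ) (hw : memW w) (hv : memV v) (h : M v = w) :
    v.coeff 1 = (1/3) * w.coeff 0 ∧
    v.coeff 3 = -(2/45) * (w.coeff 0) ^ 2 + (1/5) * w.coeff 2 ∧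
    v.coeff 4 = (1/6) * w.coeff 3 ∧
    v.coeff 5 = (8/945) * (w.coeff 0) ^ 3 - (4/105) * w.coeff 0 * w.coeff 2
      + (1/7) * w.coeff 4 ∧
    v.coeff 6 = -(1/36) * w.coeff 0 * w.coeff 3 + (1/8) * w.coeff 5 :=
  stmt11_general w v hv h
end

section
/- If h : Q → ℂ is invariant under the Bäcklund transformation, meaning h(-p_x + 2p²) = h(p_x + 2p²) for all p ∈ Q, and h vanishes on all formal power series (series with no negative powers of x), then h(u) = 0 for every Laurent series u of the form u = x^{-2} + u_0 + ∑_{k=2}^∞ u_k x^k. -/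
open PowerSeries HahnSeries LaurentSeries Finset

section Riccati

variable {K : Type*} [Field K]

/-- `g₁` does not enter the equation `(1 - n) gₙ + 2 (g²)ₙ₋₂ = Pₙ` at `n = 1`, so it is set
to `0`. -/
noncomputable def riccatiCoeff (P : K⟦X⟧) : ℕ → K
  | 0 => coeff 0 P
  | 1 => 0
  | n + 2 => (2 * ∑ p ∈ (antidiagonal n).attach, riccatiCoeff P p.1.1 * riccatiCoeff P p.1.2
      - coeff (n + 2) P) / (n + 1)
decreasing_by all_goals (have := mem_antidiagonal.mp p.2; omega)

lemma riccatiCoeff_add_two (P : K⟦X⟧) (n : ℕ) :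
    riccatiCoeff P (n + 2) = (2 * ∑ p ∈ antidiagonal n, riccatiCoeff P p.1 * riccatiCoeff P p.2
      - coeff (n + 2) P) / (n + 1) := by
  rw [riccatiCoeff, sum_attach (antidiagonal n) fun p => riccatiCoeff P p.1 * riccatiCoeff P p.2]

lemma coeff_two_mul_sub_derivative_add_two_mul_sq (g : K⟦X⟧) (n : ℕ) :
    coeff n (2 * g - d⁄dX K (X * g) + 2 * (X * g) ^ 2) =
      (1 - n) * coeff n g + 2 * coeff n (X ^ 2 * g ^ 2) := by
  simp only [two_mul, map_add, map_sub, coeff_derivative, coeff_succ_X_mul, mul_pow]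
  ring

theorem exists_two_mul_sub_derivative_add_two_mul_sq_eq [CharZero K] (P : K⟦X⟧)
    (hP : coeff 1 P = 0) : ∃ g : K⟦X⟧, 2 * g - d⁄dX K (X * g) + 2 * (X * g) ^ 2 = P := by
  refine ⟨mk (riccatiCoeff P), ?_⟩
  ext n
  rw [coeff_two_mul_sub_derivative_add_two_mul_sq]
  match n with
  | 0 => simp [riccatiCoeff, coeff_X_pow_mul']
  | 1 => simp [riccatiCoeff, coeff_X_pow_mul', hP]
  | n + 2 =>
    rw [coeff_X_pow_mul, pow_two, PowerSeries.coeff_mul, coeff_mk, riccatiCoeff_add_two]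
    simp only [coeff_mk]
    field_simp
    push_cast
    ring

end Riccati

section Coe

variable {R : Type*} [Semiring R]

lemma two_mul_single (n : ℤ) (c : R) : (2 : R⸨X⸩) * single n c = single n (2 * c) := by
  rw [two_mul, two_mul, single_add]

lemma coeff_coe_of_neg (f : R⟦X⟧) {k : ℤ} (hk : k < 0) : (f : R⸨X⸩).coeff k = 0 := by
  simp [PowerSeries.coeff_coe, hk]

lemma eq_single_add_coe_of_coeff_eq_zero (u : R⸨X⸩) (h₁ : u.coeff (-1) = 0)
    (hlt : ∀ k < (-2 : ℤ), u.coeff k = 0) :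
    u = single (-2) (u.coeff (-2)) + ((mk fun n : ℕ => u.coeff n : R⟦X⟧) : R⸨X⸩) := by
  ext k
  rw [coeff_add, coeff_single]
  rcases Int.lt_or_le k 0 with hk | hk
  · rw [coeff_coe_of_neg _ hk, add_zero]
    split_ifs with h₂
    · rw [h₂]
    · obtain rfl | hk : k = -1 ∨ k < -2 := by omega
      exacts [h₁, hlt k hk]
  · lift k to ℕ using hk
    simp

end Coe

lemma D_eq_derivative (q : ℂ⸨X⸩) : D q = LaurentSeries.derivative ℂ q := by
  ext k
  simp

lemma D_add (p q : ℂ⸨X⸩) : D (p + q) = D p + D q := by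
  simp [D_eq_derivative]

lemma D_single (n : ℤ) (c : ℂ) : D (single n c) = single (n - 1) (n * c) := by
  simp [D_eq_derivative]

lemma D_coe (f : ℂ⟦X⟧) : D f = (d⁄dX ℂ f : ℂ⟦X⟧) := by
  ext k
  rcases Int.lt_or_le k 0 with hk | hk
  · rw [D_coeff, coeff_coe_of_neg _ hk]
    obtain rfl | hk : k = -1 ∨ k + 1 < 0 := by omega
    · simp
    · rw [coeff_coe_of_neg _ hk, mul_zero]
  · lift k to ℕ using hk
    rw [D_coeff, ← Nat.cast_succ, coeff_coe_powerSeries, coeff_coe_powerSeries, coeff_derivative,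
      mul_comm]
    push_cast
    ring

noncomputable def backlundPotential (g : ℂ⟦X⟧) : ℂ⸨X⸩ :=
  single (-1) (1 / 2) + ((X * g : ℂ⟦X⟧) : ℂ⸨X⸩)

lemma D_backlundPotential (g : ℂ⟦X⟧) :
    D (backlundPotential g) = -single (-2) (1 / 2) + ((d⁄dX ℂ (X * g) : ℂ⟦X⟧) : ℂ⸨X⸩) := by
  rw [backlundPotential, D_add, D_single, D_coe, ← single_neg]
  norm_num

lemma two_mul_backlundPotential_sq (g : ℂ⟦X⟧) :
    2 * backlundPotential g ^ 2 =
      single (-2) (1 / 2) + 2 * ((g + (X * g) ^ 2 : ℂ⟦X⟧) : ℂ⸨X⸩) := by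
  have h₁ : 2 * (single (-1) (1 / 2 : ℂ) * single (-1) (1 / 2)) = single (-2) (1 / 2) := by
    rw [single_mul_single, two_mul_single]; norm_num
  have h₂ : 2 * (single (-1) (1 / 2 : ℂ) * single 1 1) = 1 := by
    rw [single_mul_single, two_mul_single]; norm_num
  rw [backlundPotential]
  push_cast [coe_X]
  linear_combination h₁ + 2 * (g : ℂ⸨X⸩) * h₂

lemma neg_D_add_two_mul_sq_backlundPotential (g : ℂ⟦X⟧) :
    -D (backlundPotential g) + 2 * backlundPotential g ^ 2 =
      single (-2) 1 + ((2 * g - d⁄dX ℂ (X * g) + 2 * (X * g) ^ 2 : ℂ⟦X⟧) : ℂ⸨X⸩) := by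
  have h : single (-2) (1 / 2 : ℂ) + single (-2) (1 / 2) = single (-2) 1 := by
    rw [← single_add]; norm_num
  rw [D_backlundPotential, two_mul_backlundPotential_sq]
  push_cast [map_ofNat]
  linear_combination h

lemma D_add_two_mul_sq_backlundPotential (g : ℂ⟦X⟧) :
    D (backlundPotential g) + 2 * backlundPotential g ^ 2 =
      ((2 * g + d⁄dX ℂ (X * g) + 2 * (X * g) ^ 2 : ℂ⟦X⟧) : ℂ⸨X⸩) := by
  rw [D_backlundPotential, two_mul_backlundPotential_sq]
  push_cast [map_ofNat]
  ring

/-- If `h` is invariant under the Bäcklund transformation and vanishes on all formal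
power series, then `h` vanishes on every `u = x⁻² + u₀ + ∑_{k≥2} uₖ xᵏ`. -/
theorem stmt15 (h : LaurentSeries ℂ → ℂ)
    (hB : ∀ p : LaurentSeries ℂ, h (-(D p) + 2 * p ^ 2) = h (D p + 2 * p ^ 2))
    (hZ : ∀ z : LaurentSeries ℂ, (∀ k < (0 : ℤ), z.coeff k = 0) → h z = 0)
    (u : LaurentSeries ℂ)
    (hu : u.coeff (-2) = 1 ∧ u.coeff (-1) = 0 ∧ u.coeff 1 = 0 ∧
      ∀ k < (-2 : ℤ), u.coeff k = 0) :
    h u = 0 := by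
  obtain ⟨h₂, h₁, hcoeff₁, hlt⟩ := hu
  obtain ⟨g, hg⟩ := exists_two_mul_sub_derivative_add_two_mul_sq_eq
    (mk fun n : ℕ => u.coeff n) (by simpa using hcoeff₁)
  have hu : u = -D (backlundPotential g) + 2 * backlundPotential g ^ 2 := by
    rw [neg_D_add_two_mul_sq_backlundPotential, hg, ← h₂]
    exact eq_single_add_coe_of_coeff_eq_zero u h₁ hlt
  rw [hu, hB, D_add_two_mul_sq_backlundPotential]
  exact hZ _ fun k hk => coeff_coe_of_neg _ hk
end

section
/- The composition of a functional with a transformation is well defined on the quotient 𝔉/Im∂: if F - F' ∈ Im∂, then F∘∘G - F'∘∘G ∈ Im∂ for every G ∈ 𝔉. Hence f∘∘G := class of F∘∘G depends only on the class f of F. -/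
open MvPolynomial in
/-- The derivation `∂` on `𝔉 = ℂ[ξ, ξ_x, ξ_xx, …]` (indeterminate `j` ↦ `ξ^{(j)}`),
determined by shifting each indeterminate to the next one. -/
noncomputable def pd : Derivation ℂ (MvPolynomial ℕ ℂ) (MvPolynomial ℕ ℂ) :=
  mkDerivation ℂ (fun j => X (j + 1))

open MvPolynomial in
/-- The composition (substitution) product `F ∘∘ G`: replace `ξ, ξ_x, ξ_xx, …`
in `F` by `G, ∂G, ∂²G, …`. -/
noncomputable def subst (G F : MvPolynomial ℕ ℂ) : MvPolynomial ℕ ℂ :=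
  aeval (fun j => (fun p => pd p)^[j] G) F

open MvPolynomial in
lemma pd_X (n : ℕ) : pd (X n : MvPolynomial ℕ ℂ) = X (n + 1) := by
  simp [pd, mkDerivation_X]

open MvPolynomial in
lemma subst_pd (G H : MvPolynomial ℕ ℂ) : subst G (pd H) = pd (subst G H) := by
  induction H using MvPolynomial.induction_on with
  | C a => simp [subst]
  | add p q hp hq => simp only [subst, map_add] at *; rw [hp, hq]
  | mul_X p n hp =>
    have hX : subst G (X n) = (fun p => pd p)^[n] G := by simp [subst]
    have hX1 : subst G (X (n + 1)) = pd ((fun p => pd p)^[n] G) := by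
      simp [subst, Function.iterate_succ_apply']
    rw [Derivation.leibniz, show (subst G : MvPolynomial ℕ ℂ → _) = aeval
      (fun j => (fun p => pd p)^[j] G) from rfl] at *
    simp only [map_add, map_mul, smul_eq_mul] at *
    rw [pd_X, hp, hX, hX1, Derivation.leibniz]
    simp only [smul_eq_mul]

/-- Composition with a transformation is well defined on the quotient `𝔉/Im ∂`:
if `F - F' ∈ Im ∂` then `F∘∘G - F'∘∘G ∈ Im ∂`. -/
theorem stmt18 (G F F' : MvPolynomial ℕ ℂ) (h : ∃ H, F - F' = pd H) :
    ∃ K, subst G F - subst G F' = pd K := by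
  obtain ⟨H, hH⟩ := h
  refine ⟨subst G H, ?_⟩
  have : subst G (F - F') = subst G (pd H) := by rw [hH]
  rw [subst_pd] at this
  simpa [subst, map_sub] using this
end

section
/- For the Miura map M(v) = v_x + 2v² on formal Laurent series, the element v ∈ V solving M(v) = w (with w a power series in W) is determined by the recursion v_{k+1} = -2/(k+3) · (2v_1 v_{k-1} + ∑_{j=3}^{k-3} v_j v_{k-j}) + w_k/(k+3) for all k ≥ 6; in particular every coefficient v_m (m ≥ 7) is a polynomial in w_0, w_2, …, w_{m-1}. -/
lemma mul_coeff_Icc (v w : LaurentSeries ℂ)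
    (hv : ∀ k < (-1:ℤ), v.coeff k = 0) (hw : ∀ k < (-1:ℤ), w.coeff k = 0) (k : ℤ) :
    (v * w).coeff k = ∑ i ∈ Finset.Icc (-1:ℤ) (k+1), v.coeff i * w.coeff (k - i) := by
  classical
  rw [HahnSeries.coeff_mul]
  have hinj : Function.Injective (fun i : ℤ => (i, k - i)) := by
    intro a b h
    simpa using congrArg Prod.fst h
  have hS : ∑ i ∈ Finset.Icc (-1:ℤ) (k+1), v.coeff i * w.coeff (k - i)
      = ∑ p ∈ (Finset.Icc (-1:ℤ) (k+1)).map ⟨fun i => (i, k - i), hinj⟩,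
          v.coeff p.1 * w.coeff p.2 := by
    rw [Finset.sum_map]; rfl
  rw [hS]
  apply Finset.sum_subset
  · intro p hp
    rw [Finset.mem_addAntidiagonal] at hp
    obtain ⟨h1, h2, h3⟩ := hp
    have hp1 : -1 ≤ p.1 := by
      by_contra h
      exact h1 (hv p.1 (by omega))
    have hp2 : -1 ≤ p.2 := by
      by_contra h
      exact h2 (hw p.2 (by omega))
    simp only [Finset.mem_map, Finset.mem_Icc, Function.Embedding.coeFn_mk]
    exact ⟨p.1, ⟨hp1, by omega⟩, by rw [show k - p.1 = p.2 by omega]⟩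
  · intro p hp hnp
    simp only [Finset.mem_map, Finset.mem_Icc, Function.Embedding.coeFn_mk] at hp
    obtain ⟨i, hi, rfl⟩ := hp
    rw [Finset.mem_addAntidiagonal] at hnp
    push_neg at hnp
    by_cases h1 : v.coeff i = 0
    · rw [h1, zero_mul]
    · by_cases h2 : w.coeff (k - i) = 0
      · rw [h2, mul_zero]
      · exact absurd (by omega) (hnp h1 h2)

lemma Mcoeff (v : LaurentSeries ℂ) (hv : memV v) (k : ℤ) :
    (M v).coeff k = ((k+1:ℤ):ℂ) * v.coeff (k+1)
      + 2 * ∑ i ∈ Finset.Icc (-1:ℤ) (k+1), v.coeff i * v.coeff (k-i) := by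
  have h2 : (2 * v ^ 2 : LaurentSeries ℂ) = v * v + v * v := by ring
  unfold M
  rw [HahnSeries.coeff_add, D_coeff, h2, HahnSeries.coeff_add,
    mul_coeff_Icc v v hv.2.2.2 hv.2.2.2]
  ring

lemma coeff_eq (v w : LaurentSeries ℂ) (hv : memV v) (hw : memW w) (hM : M v = w) (k : ℤ) :
    ((k+1:ℤ):ℂ) * v.coeff (k+1)
      + 2 * ∑ i ∈ Finset.Icc (-1:ℤ) (k+1), v.coeff i * v.coeff (k-i) = w.coeff k := by
  rw [← Mcoeff v hv, hM]

lemma hsum4 (a b c d : ℤ) (f : ℤ → ℂ) (hab : a < b) (hbc : b < c) (hcd : c < d) :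
    ∑ i ∈ ({a,b,c,d} : Finset ℤ), f i = f a + f b + f c + f d := by
  rw [Finset.sum_insert (by simp; omega), Finset.sum_insert (by simp; omega),
    Finset.sum_insert (by simp; omega), Finset.sum_singleton]
  ring

lemma sum_split (v : LaurentSeries ℂ) (hv : memV v) (k : ℤ) (hk : 5 ≤ k) :
    ∑ i ∈ Finset.Icc (-1:ℤ) (k+1), v.coeff i * v.coeff (k-i)
      = v.coeff (k+1) + 2 * v.coeff 1 * v.coeff (k-1)
        + ∑ j ∈ Finset.Icc (3:ℤ) (k-3), v.coeff j * v.coeff (k-j) := by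
  have h1 : Finset.Icc (-1:ℤ) (k+1) = Finset.Ioc (-2) (k+1) := by
    ext x; simp [Finset.mem_Icc, Finset.mem_Ioc]; omega
  have h2 : Finset.Ioc (-2:ℤ) (k+1)
      = Finset.Ioc (-2) (k-3) ∪ Finset.Ioc (k-3) (k+1) :=
    (Finset.Ioc_union_Ioc_eq_Ioc (by omega) (by omega)).symm
  have h3 : Finset.Ioc (-2:ℤ) (k-3) = Finset.Ioc (-2) 2 ∪ Finset.Ioc 2 (k-3) :=
    (Finset.Ioc_union_Ioc_eq_Ioc (by omega) (by omega)).symm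
  have d1 : Disjoint (Finset.Ioc (-2:ℤ) (k-3)) (Finset.Ioc (k-3) (k+1)) := by
    rw [Finset.disjoint_left]; intro x hx hx'
    simp [Finset.mem_Ioc] at hx hx'; omega
  have d2 : Disjoint (Finset.Ioc (-2:ℤ) 2) (Finset.Ioc 2 (k-3)) := by
    rw [Finset.disjoint_left]; intro x hx hx'
    simp [Finset.mem_Ioc] at hx hx'; omega
  have e1 : Finset.Ioc (-2:ℤ) 2 = ({-1,0,1,2} : Finset ℤ) := by decide
  have e2 : Finset.Ioc (2:ℤ) (k-3) = Finset.Icc 3 (k-3) := by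
    ext x; simp [Finset.mem_Icc, Finset.mem_Ioc]; omega
  have e3 : Finset.Ioc (k-3:ℤ) (k+1) = ({k-2,k-1,k,k+1} : Finset ℤ) := by
    ext x; simp [Finset.mem_Ioc, Finset.mem_insert]; omega
  rw [h1, h2, Finset.sum_union d1, h3, Finset.sum_union d2, e1, e2, e3,
    hsum4 _ _ _ _ _ (by omega) (by omega) (by omega),
    hsum4 _ _ _ _ _ (by omega) (by omega) (by omega)]
  rw [show k - (k-2) = 2 by ring, show k - (k-1) = 1 by ring, show k - k = 0 by ring,
    show k - (k+1) = -1 by ring, show k - (-1) = k + 1 by ring, show k - 0 = k by ring,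
    show k - 1 = k - 1 by ring, show k - 2 = k - 2 by ring]
  rw [hv.1, hv.2.1, hv.2.2.1]
  ring

lemma rec_formula (v w : LaurentSeries ℂ) (hv : memV v) (hw : memW w) (hM : M v = w)
    (k : ℤ) (hk : 5 ≤ k) :
    v.coeff (k + 1) =
      -2 / ((k + 3 : ℤ) : ℂ) *
          (2 * v.coeff 1 * v.coeff (k - 1) +
            ∑ j ∈ Finset.Icc (3 : ℤ) (k - 3), v.coeff j * v.coeff (k - j)) +
        w.coeff k / ((k + 3 : ℤ) : ℂ) := by
  have h := coeff_eq v w hv hw hM k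
  rw [sum_split v hv k hk] at h
  have hne : ((k + 3 : ℤ) : ℂ) ≠ 0 := by
    exact_mod_cast (show (k + 3 : ℤ) ≠ 0 by omega)
  have key : v.coeff (k + 1) =
      (-2 * (2 * v.coeff 1 * v.coeff (k - 1) +
        ∑ j ∈ Finset.Icc (3 : ℤ) (k - 3), v.coeff j * v.coeff (k - j)) + w.coeff k)
        / ((k + 3 : ℤ) : ℂ) := by
    rw [eq_div_iff hne]
    push_cast at h ⊢
    linear_combination h
  rw [key]
  ring

lemma eq0 (v w : LaurentSeries ℂ) (hv : memV v) (hw : memW w) (hM : M v = w) :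
    3 * v.coeff 1 = w.coeff 0 := by
  have h := coeff_eq v w hv hw hM 0
  rw [show Finset.Icc (-1:ℤ) (0+1) = {-1,0,1} from by decide] at h
  rw [Finset.sum_insert (by decide), Finset.sum_insert (by decide),
    Finset.sum_singleton] at h
  norm_num [hv.1, hv.2.1] at h
  linear_combination h

lemma eq2 (v w : LaurentSeries ℂ) (hv : memV v) (hw : memW w) (hM : M v = w) :
    5 * v.coeff 3 + 2 * v.coeff 1 ^ 2 = w.coeff 2 := by
  have h := coeff_eq v w hv hw hM 2
  rw [show Finset.Icc (-1:ℤ) (2+1) = {-1,0,1,2,3} from by decide] at h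
  rw [Finset.sum_insert (by decide), Finset.sum_insert (by decide),
    Finset.sum_insert (by decide), Finset.sum_insert (by decide),
    Finset.sum_singleton] at h
  norm_num [hv.1, hv.2.1, hv.2.2.1] at h
  linear_combination h

lemma eq3 (v w : LaurentSeries ℂ) (hv : memV v) (hw : memW w) (hM : M v = w) :
    6 * v.coeff 4 = w.coeff 3 := by
  have h := coeff_eq v w hv hw hM 3
  rw [show Finset.Icc (-1:ℤ) (3+1) = {-1,0,1,2,3,4} from by decide] at h
  rw [Finset.sum_insert (by decide), Finset.sum_insert (by decide),
    Finset.sum_insert (by decide), Finset.sum_insert (by decide),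
    Finset.sum_insert (by decide), Finset.sum_singleton] at h
  norm_num [hv.1, hv.2.1, hv.2.2.1] at h
  linear_combination h

lemma eq4 (v w : LaurentSeries ℂ) (hv : memV v) (hw : memW w) (hM : M v = w) :
    7 * v.coeff 5 + 4 * v.coeff 1 * v.coeff 3 = w.coeff 4 := by
  have h := coeff_eq v w hv hw hM 4
  rw [show Finset.Icc (-1:ℤ) (4+1) = {-1,0,1,2,3,4,5} from by decide] at h
  rw [Finset.sum_insert (by decide), Finset.sum_insert (by decide),
    Finset.sum_insert (by decide), Finset.sum_insert (by decide),
    Finset.sum_insert (by decide), Finset.sum_insert (by decide),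
    Finset.sum_singleton] at h
  norm_num [hv.1, hv.2.1, hv.2.2.1] at h
  linear_combination h

/-- The solution `v ∈ V` of `M(v) = w` is determined by a recursion in its coefficients;
in particular each coefficient `vₘ` (`m ≥ 7`) depends only on `w₀, w₂, …, w_{m-1}`. -/
theorem stmt19 :
    (∀ v w : LaurentSeries ℂ, memV v → memW w → M v = w → ∀ k : ℤ, 6 ≤ k →
      v.coeff (k + 1) =
        -2 / ((k + 3 : ℤ) : ℂ) *
            (2 * v.coeff 1 * v.coeff (k - 1) +
              ∑ j ∈ Finset.Icc (3 : ℤ) (k - 3), v.coeff j * v.coeff (k - j)) +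
          w.coeff k / ((k + 3 : ℤ) : ℂ)) ∧
    (∀ v w v' w' : LaurentSeries ℂ, memV v → memW w → M v = w → memV v' → memW w' →
      M v' = w' → ∀ m : ℤ, 7 ≤ m →
        (∀ j : ℤ, j ≤ m - 1 → w.coeff j = w'.coeff j) → v.coeff m = v'.coeff m) := by
  constructor
  · intro v w hv hw hM k hk
    exact rec_formula v w hv hw hM k (by omega)
  · intro v w v' w' hv hw hM hv' hw' hM' m hm hagree
    have hw0 : w.coeff 0 = w'.coeff 0 := hagree 0 (by omega)
    have hw2 : w.coeff 2 = w'.coeff 2 := hagree 2 (by omega)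
    have hw3 : w.coeff 3 = w'.coeff 3 := hagree 3 (by omega)
    have hw4 : w.coeff 4 = w'.coeff 4 := hagree 4 (by omega)
    have hw5 : w.coeff 5 = w'.coeff 5 := hagree 5 (by omega)
    have h1 : v.coeff 1 = v'.coeff 1 := by
      have a := eq0 v w hv hw hM
      have b := eq0 v' w' hv' hw' hM'
      linear_combination (1/3) * a - (1/3) * b + (1/3) * hw0
    have h3 : v.coeff 3 = v'.coeff 3 := by
      have a := eq2 v w hv hw hM
      have b := eq2 v' w' hv' hw' hM'
      have a' : v.coeff 3 = (w.coeff 2 - 2 * v.coeff 1 ^ 2) / 5 := by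
        linear_combination (1/5) * a
      have b' : v'.coeff 3 = (w'.coeff 2 - 2 * v'.coeff 1 ^ 2) / 5 := by
        linear_combination (1/5) * b
      rw [a', b', h1, hw2]
    have h4 : v.coeff 4 = v'.coeff 4 := by
      have a := eq3 v w hv hw hM
      have b := eq3 v' w' hv' hw' hM'
      linear_combination (1/6) * a - (1/6) * b + (1/6) * hw3
    have h5 : v.coeff 5 = v'.coeff 5 := by
      have a := eq4 v w hv hw hM
      have b := eq4 v' w' hv' hw' hM'
      have a' : v.coeff 5 = (w.coeff 4 - 4 * v.coeff 1 * v.coeff 3) / 7 := by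
        linear_combination (1/7) * a
      have b' : v'.coeff 5 = (w'.coeff 4 - 4 * v'.coeff 1 * v'.coeff 3) / 7 := by
        linear_combination (1/7) * b
      rw [a', b', h1, h3, hw4]
    have hempty : Finset.Icc (3:ℤ) (5 - 3) = ∅ := by decide
    have h6 : v.coeff 6 = v'.coeff 6 := by
      have a := rec_formula v w hv hw hM 5 (by norm_num)
      have b := rec_formula v' w' hv' hw' hM' 5 (by norm_num)
      rw [hempty, Finset.sum_empty] at a b
      norm_num at a b
      rw [a, b, h1, hw5, h4]
    have main : ∀ n : ℕ, ∀ j : ℤ, j ≤ m → j ≤ (n:ℤ) → v.coeff j = v'.coeff j := by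
      intro n
      induction n using Nat.strong_induction_on with
      | _ n ih =>
        intro j hjm hjn
        rcases lt_or_ge j (-1) with hneg | hge
        · rw [hv.2.2.2 j hneg, hv'.2.2.2 j hneg]
        by_cases hsm : j ≤ 6
        · interval_cases j
          · rw [hv.1, hv'.1]
          · rw [hv.2.1, hv'.2.1]
          · exact h1
          · rw [hv.2.2.1, hv'.2.2.1]
          · exact h3
          · exact h4
          · exact h5
          · exact h6
        · push_neg at hsm
          obtain ⟨n', rfl⟩ : ∃ n', n = n' + 1 := ⟨n - 1, by omega⟩
          have ih' := ih n' (by omega)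
          have hk : (5:ℤ) ≤ j - 1 := by omega
          have a := rec_formula v w hv hw hM (j - 1) hk
          have b := rec_formula v' w' hv' hw' hM' (j - 1) hk
          rw [show j - 1 + 1 = j by ring] at a b
          have hsumeq : ∑ i ∈ Finset.Icc (3:ℤ) (j - 1 - 3), v.coeff i * v.coeff (j - 1 - i)
              = ∑ i ∈ Finset.Icc (3:ℤ) (j - 1 - 3), v'.coeff i * v'.coeff (j - 1 - i) := by
            apply Finset.sum_congr rfl
            intro i hi
            simp only [Finset.mem_Icc] at hi
            rw [ih' i (by omega) (by omega), ih' (j - 1 - i) (by omega) (by omega)]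
          rw [a, b, hagree (j - 1) (by omega), h1, hsumeq,
            ih' (j - 1 - 1) (by omega) (by omega)]
    exact main m.toNat m le_rfl (by omega)
end
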